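/- arXiv:1208.3386 — 2 statements merged into one kernel-verified Lean document; each statement's English description precedes it below -/
import Mathlib

section
/- Let B_r := {x ∈ H : |x|_H ≤ r} with the weak topology, metrized by a metric q. If functions u_n : [0,T] → H satisfy (i) sup_n sup_{s∈[0,T]} |u_n(s)|_H ≤ r and (ii) u_n → u in C([0,T]; U′), then u and all u_n belong to C([0,T]; B_r-weak) and sup_{t∈[0,T]} q(u_n(t), u(t)) → 0, i.e. u_n → u in C([0,T]; B_r-weak). -/
/-! Convergence in `C([0,T]; U′)` only tests `u_n(t)` against the dense subspace `ι U` of `H`.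
Against a bounded set of vectors, testing on a dense subspace already controls every `h ∈ H`:
`(v, h) = (v, y) + (v, h - y)` with `|(v, h - y)| ≤ ‖v‖ ‖h - y‖`. Applied to `u_n(t) - u(t)` and to
`u(t) - u(t₀)` this gives uniform weak convergence and weak continuity; the bound `‖u(t)‖ ≤ r`
follows because the closed ball is closed under pointwise limits tested on `ι U`. -/

open MeasureTheory Filter
open scoped RealInnerProductSpace

/-- The embedding `H ≅ H′ ↪ U′` induced by a dense embedding `ι : U ↪ H`:
`h ∈ H` acts on `φ ∈ U` by `⟨h, φ⟩ = (h, ιφ)_H`. -/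
noncomputable def dualEmbed {U H : Type*}
    [NormedAddCommGroup U] [InnerProductSpace ℝ U]
    [NormedAddCommGroup H] [InnerProductSpace ℝ H]
    (ι : U →L[ℝ] H) (h : H) : StrongDual ℝ U :=
  (innerSL ℝ h).comp ι

open scoped Topology

theorem tendstoUniformlyOn_iff_tendsto_sub {ι α G : Type*} [SeminormedAddCommGroup G]
    {F : ι → α → G} {f : α → G} {l : Filter ι} {s : Set α} :
    TendstoUniformlyOn F f l s ↔
      Tendsto (fun q : ι × α => F q.1 q.2 - f q.2) (l ×ˢ 𝓟 s) (𝓝 0) := by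
  rw [tendstoUniformlyOn_iff_tendsto, uniformity_eq_comap_nhds_zero, tendsto_comap_iff]
  rfl

section DenseTesting

variable {E : Type*} [NormedAddCommGroup E] [InnerProductSpace ℝ E] {D : Set E}

theorem norm_le_of_dense_inner_le (hD : Dense D) {x : E} {r : ℝ} (hr : 0 ≤ r)
    (hx : ∀ y ∈ D, ⟪x, y⟫ ≤ r * ‖y‖) : ‖x‖ ≤ r := by
  have hclosed : IsClosed {y : E | ⟪x, y⟫ ≤ r * ‖y‖} := isClosed_le (by fun_prop) (by fun_prop)
  have hxx : ‖x‖ * ‖x‖ ≤ r * ‖x‖ := by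
    simpa only [real_inner_self_eq_norm_mul_norm] using
      hD.induction (P := fun y => ⟪x, y⟫ ≤ r * ‖y‖) hx hclosed x
  rcases (norm_nonneg x).eq_or_lt with hx0 | hx0
  · rw [← hx0]; exact hr
  · exact le_of_mul_le_mul_right hxx hx0

theorem tendsto_inner_zero_of_dense {β : Type*} {l : Filter β} {v : β → E} {R : ℝ}
    (hD : Dense D) (hv : ∀ᶠ b in l, ‖v b‖ ≤ R)
    (hvD : ∀ y ∈ D, Tendsto (fun b => ⟪v b, y⟫) l (𝓝 0)) (h : E) :
    Tendsto (fun b => ⟪v b, h⟫) l (𝓝 0) := by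
  refine Metric.tendsto_nhds.mpr fun ε hε => ?_
  obtain ⟨y, hyD, hy⟩ : ∃ y ∈ D, R * ‖h - y‖ < ε / 2 :=
    hD.exists_mem_open (U := {y | R * ‖h - y‖ < ε / 2})
      (isOpen_lt (by fun_prop) continuous_const) ⟨h, by simpa using hε⟩
  filter_upwards [hv, Metric.tendsto_nhds.mp (hvD y hyD) (ε / 2) (half_pos hε)] with b hb hby
  rw [Real.dist_eq, sub_zero] at hby ⊢
  have hsplit : ⟪v b, h⟫ = ⟪v b, y⟫ + ⟪v b, h - y⟫ := by rw [inner_sub_right]; ring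
  calc |⟪v b, h⟫| ≤ |⟪v b, y⟫| + ‖v b‖ * ‖h - y‖ := by
        rw [hsplit]
        exact (abs_add_le _ _).trans (add_le_add_right (abs_real_inner_le_norm _ _) _)
    _ ≤ |⟪v b, y⟫| + R * ‖h - y‖ := by gcongr
    _ < ε := by linarith

theorem continuousOn_inner_of_dense {α : Type*} [TopologicalSpace α] {f : α → E} {s : Set α}
    {r : ℝ} (hD : Dense D) (hf : ∀ t ∈ s, ‖f t‖ ≤ r)
    (hfD : ∀ y ∈ D, ContinuousOn (fun t => ⟪f t, y⟫) s) (h : E) :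
    ContinuousOn (fun t => ⟪f t, h⟫) s := by
  intro t₀ ht₀
  have hbound : ∀ᶠ t in 𝓝[s] t₀, ‖f t - f t₀‖ ≤ r + r :=
    eventually_nhdsWithin_of_forall fun t ht =>
      (norm_sub_le _ _).trans (add_le_add (hf t ht) (hf t₀ ht₀))
  have hsubD : ∀ y ∈ D, Tendsto (fun t => ⟪f t - f t₀, y⟫) (𝓝[s] t₀) (𝓝 0) := fun y hy => by
    simpa only [ContinuousWithinAt, inner_sub_left, tendsto_sub_nhds_zero_iff] using hfD y hy t₀ ht₀
  simpa only [ContinuousWithinAt, inner_sub_left, tendsto_sub_nhds_zero_iff] using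
    tendsto_inner_zero_of_dense hD hbound hsubD h

theorem tendstoUniformlyOn_inner_of_dense {ι α : Type*} {F : ι → α → E} {f : α → E}
    {l : Filter ι} {s : Set α} {r : ℝ} (hD : Dense D)
    (hF : ∀ i, ∀ t ∈ s, ‖F i t‖ ≤ r) (hf : ∀ t ∈ s, ‖f t‖ ≤ r)
    (hFD : ∀ y ∈ D, TendstoUniformlyOn (fun i t => ⟪F i t, y⟫) (fun t => ⟪f t, y⟫) l s)
    (h : E) :
    TendstoUniformlyOn (fun i t => ⟪F i t, h⟫) (fun t => ⟪f t, h⟫) l s := by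
  have hbound : ∀ᶠ q in l ×ˢ 𝓟 s, ‖F q.1 q.2 - f q.2‖ ≤ r + r :=
    eventually_prod_principal_iff.mpr <| Eventually.of_forall fun i t ht =>
      (norm_sub_le _ _).trans (add_le_add (hF i t ht) (hf t ht))
  have hsubD : ∀ y ∈ D, Tendsto (fun q : ι × α => ⟪F q.1 q.2 - f q.2, y⟫) (l ×ˢ 𝓟 s) (𝓝 0) :=
    fun y hy => by simpa only [tendstoUniformlyOn_iff_tendsto_sub, inner_sub_left] using hFD y hy
  simpa only [tendstoUniformlyOn_iff_tendsto_sub, inner_sub_left] using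
    tendsto_inner_zero_of_dense hD hbound hsubD h

end DenseTesting

theorem stmt_11_general {U H : Type*}
    [NormedAddCommGroup U] [InnerProductSpace ℝ U]
    [NormedAddCommGroup H] [InnerProductSpace ℝ H]
    (ι : U →L[ℝ] H) (hdense : DenseRange ι)
    (T r : ℝ)
    (u : ℝ → H) (un : ℕ → ℝ → H)
    (hbdd : ∀ n, ∀ s ∈ Set.Icc (0:ℝ) T, ‖un n s‖ ≤ r)
    (hcont : ∀ n, ContinuousOn (fun t => dualEmbed ι (un n t)) (Set.Icc 0 T))
    (hconv : TendstoUniformlyOn (fun n t => dualEmbed ι (un n t))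
      (fun t => dualEmbed ι (u t)) atTop (Set.Icc 0 T)) :
    (∀ t ∈ Set.Icc (0:ℝ) T, ‖u t‖ ≤ r) ∧
      (∀ h : H, ContinuousOn (fun t => ⟪u t, h⟫) (Set.Icc 0 T)) ∧
      (∀ n, ∀ h : H, ContinuousOn (fun t => ⟪un n t, h⟫) (Set.Icc 0 T)) ∧
      (∀ h : H, TendstoUniformlyOn (fun n t => ⟪un n t, h⟫)
        (fun t => ⟪u t, h⟫) atTop (Set.Icc 0 T)) := by
  -- `⟪x, ι φ⟫` unfolds to `dualEmbed ι x φ`: testing against `ι φ` is evaluation at `φ`.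
  have hconvD : ∀ y ∈ Set.range ι, TendstoUniformlyOn (fun n t => ⟪un n t, y⟫)
      (fun t => ⟪u t, y⟫) atTop (Set.Icc 0 T) := by
    rintro _ ⟨φ, rfl⟩
    exact (ContinuousLinearMap.apply ℝ ℝ φ).uniformContinuous.comp_tendstoUniformlyOn hconv
  have hcontD : ∀ n, ∀ y ∈ Set.range ι, ContinuousOn (fun t => ⟪un n t, y⟫) (Set.Icc 0 T) := by
    rintro n _ ⟨φ, rfl⟩
    exact (ContinuousLinearMap.apply ℝ ℝ φ).continuous.comp_continuousOn (hcont n)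
  have hu : ∀ t ∈ Set.Icc (0:ℝ) T, ‖u t‖ ≤ r := fun t ht =>
    norm_le_of_dense_inner_le hdense ((norm_nonneg _).trans (hbdd 0 t ht)) fun y hy =>
      le_of_tendsto' ((hconvD y hy).tendsto_at ht) fun n =>
        (real_inner_le_norm _ _).trans (mul_le_mul_of_nonneg_right (hbdd n t ht) (norm_nonneg _))
  have hcontuD : ∀ y ∈ Set.range ι, ContinuousOn (fun t => ⟪u t, y⟫) (Set.Icc 0 T) :=
    fun y hy => (hconvD y hy).continuousOn (Eventually.of_forall fun n => hcontD n y hy).frequently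
  exact ⟨hu, continuousOn_inner_of_dense hdense hu hcontuD,
    fun n => continuousOn_inner_of_dense hdense (hbdd n) (hcontD n),
    tendstoUniformlyOn_inner_of_dense hdense hbdd hu hconvD⟩

/-- (Lemma 3.6.)  If `u_n : [0,T] → H` satisfy (i) `sup_n sup_s |u_n(s)|_H ≤ r` and
(ii) `u_n → u` in `C([0,T];U′)`, then `u` and all `u_n` belong to
`C([0,T]; B_r-weak)` and `u_n → u` in `C([0,T]; B_r-weak)`, i.e. the functions take
values in the ball of radius `r`, are weakly continuous, and
`(u_n(·), h)_H → (u(·), h)_H` uniformly on `[0,T]` for every `h ∈ H`. -/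
theorem stmt_11 {U H : Type*}
    [NormedAddCommGroup U] [InnerProductSpace ℝ U] [CompleteSpace U]
    [NormedAddCommGroup H] [InnerProductSpace ℝ H] [CompleteSpace H]
    (ι : U →L[ℝ] H) (hinj : Function.Injective ι) (hdense : DenseRange ι)
    (T r : ℝ) (hT : 0 < T) (hr : 0 < r)
    (u : ℝ → H) (un : ℕ → ℝ → H)
    (hbdd : ∀ n, ∀ s ∈ Set.Icc (0:ℝ) T, ‖un n s‖ ≤ r)
    (hcont : ∀ n, ContinuousOn (fun t => dualEmbed ι (un n t)) (Set.Icc 0 T))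
    (hconv : TendstoUniformlyOn (fun n t => dualEmbed ι (un n t))
      (fun t => dualEmbed ι (u t)) atTop (Set.Icc 0 T)) :
    (∀ t ∈ Set.Icc (0:ℝ) T, ‖u t‖ ≤ r) ∧
      (∀ h : H, ContinuousOn (fun t => ⟪u t, h⟫) (Set.Icc 0 T)) ∧
      (∀ n, ∀ h : H, ContinuousOn (fun t => ⟪un n t, h⟫) (Set.Icc 0 T)) ∧
      (∀ h : H, TendstoUniformlyOn (fun n t => ⟪un n t, h⟫)
        (fun t => ⟪u t, h⟫) atTop (Set.Icc 0 T)) :=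
  stmt_11_general ι hdense T r u un hbdd hcont hconv
end

section
/- Let u ∈ L²(0,T;H) and let (u_n) be bounded in L²(0,T;H) with u_n → u in L²(0,T;H_loc). Fix γ > d/2 + 1. Then for every t ∈ [0,T] and every ψ ∈ V_γ, ∫₀^t ⟨B(u_n(s), u_n(s)), ψ⟩ ds → ∫₀^t ⟨B(u(s), u(s)), ψ⟩ ds as n → ∞. -/
open MeasureTheory Filter Topology

/-!
For a test function `ψ ∈ D` the nonlinearity is local, so
`|⟨B(uₙ,uₙ) - B(u,u), ψ⟩| ≤ C ‖ψ‖ ‖ρ_R‖ |ρ_R (uₙ - u)| (|uₙ| + |u|)` at each time, and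
Cauchy–Schwarz in time together with the `L²` bound on `uₙ` gives convergence for such `ψ`.
The functionals `ψ ↦ ∫₀ᵗ ⟨B(uₙ,uₙ), ψ⟩` are uniformly bounded by `‖B‖ sup ‖uₙ‖²_{L²}`, hence
equicontinuous, and pointwise convergence on the dense set `D` extends to all of `V_γ`.
-/

section Integrals

variable {α : Type*} [MeasurableSpace α] {μ : Measure α}

theorem integral_mul_le_sqrt_integral_sq_mul_sqrt_integral_sq {f g : α → ℝ}
    (hf₀ : 0 ≤ᵐ[μ] f) (hg₀ : 0 ≤ᵐ[μ] g) (hf : MemLp f 2 μ) (hg : MemLp g 2 μ) :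
    ∫ a, f a * g a ∂μ ≤ √(∫ a, f a ^ 2 ∂μ) * √(∫ a, g a ^ 2 ∂μ) := by
  have h := integral_mul_le_Lp_mul_Lq_of_nonneg Real.HolderConjugate.two_two hf₀ hg₀
    (by simpa using hf) (by simpa using hg)
  simpa only [Real.sqrt_eq_rpow, Real.rpow_two, one_div] using h

theorem integral_add_sq_le {f g : α → ℝ} (hf : MemLp f 2 μ) (hg : MemLp g 2 μ) :
    ∫ a, (f a + g a) ^ 2 ∂μ ≤ 2 * ∫ a, f a ^ 2 ∂μ + 2 * ∫ a, g a ^ 2 ∂μ := by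
  rw [← integral_const_mul, ← integral_const_mul,
    ← integral_add (hf.integrable_sq.const_mul 2) (hg.integrable_sq.const_mul 2)]
  exact integral_mono (hf.add hg).integrable_sq
    ((hf.integrable_sq.const_mul 2).add (hg.integrable_sq.const_mul 2))
    fun a => by nlinarith [sq_nonneg (f a - g a)]

theorem tendsto_integral_mul_of_tendsto_integral_sq {ι : Type*} {l : Filter ι}
    {f g : ι → α → ℝ} (hf₀ : ∀ i, 0 ≤ᵐ[μ] f i) (hg₀ : ∀ i, 0 ≤ᵐ[μ] g i)
    (hf : ∀ i, MemLp (f i) 2 μ) (hg : ∀ i, MemLp (g i) 2 μ)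
    (hf_lim : Tendsto (fun i => ∫ a, f i a ^ 2 ∂μ) l (𝓝 0))
    {K : ℝ} (hg_bdd : ∀ i, ∫ a, g i a ^ 2 ∂μ ≤ K) :
    Tendsto (fun i => ∫ a, f i a * g i a ∂μ) l (𝓝 0) := by
  have h_bound : Tendsto (fun i => √(∫ a, f i a ^ 2 ∂μ) * √K) l (𝓝 0) := by
    simpa using ((Real.continuous_sqrt.tendsto 0).comp hf_lim).mul_const √K
  refine squeeze_zero (fun i => integral_nonneg_of_ae ?_) (fun i => ?_) h_bound
  · filter_upwards [hf₀ i, hg₀ i] with a hfa hga using mul_nonneg hfa hga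
  · exact (integral_mul_le_sqrt_integral_sq_mul_sqrt_integral_sq (hf₀ i) (hg₀ i) (hf i)
      (hg i)).trans (mul_le_mul_of_nonneg_left (Real.sqrt_le_sqrt (hg_bdd i)) (Real.sqrt_nonneg _))

theorem integral_norm_sq_mono_measure {E : Type*} [NormedAddCommGroup E] {ν : Measure α}
    (hμν : μ ≤ ν) {f : α → E} (hf : MemLp f 2 ν) :
    ∫ a, ‖f a‖ ^ 2 ∂μ ≤ ∫ a, ‖f a‖ ^ 2 ∂ν :=
  integral_mono_measure hμν (Eventually.of_forall fun _ => by positivity) hf.norm.integrable_sq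

end Integrals

theorem ContinuousLinearMap.tendsto_apply_of_dense {𝕜 E F ι : Type*}
    [NontriviallyNormedField 𝕜] [NormedAddCommGroup E] [NormedSpace 𝕜 E]
    [NormedAddCommGroup F] [NormedSpace 𝕜 F] {l : Filter ι}
    {L : ι → E →L[𝕜] F} {L₀ : E →L[𝕜] F} {C : ℝ} (hL : ∀ i, ‖L i‖ ≤ C)
    {D : Set E} (hD : Dense D) (h : ∀ x ∈ D, Tendsto (fun i => L i x) l (𝓝 (L₀ x))) (x : E) :
    Tendsto (fun i => L i x) l (𝓝 (L₀ x)) := by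
  have hbdd : ∃ C, ∀ i, ‖L i‖ ≤ C := ⟨C, hL⟩
  have hequi : Equicontinuous ((↑) ∘ L) := ((NormedSpace.equicontinuous_TFAE L).out 5 1).mp hbdd
  have hclosed := hequi.isClosed_setOfPred_tendsto (l := l) L₀.continuous
  exact closure_minimal h hclosed (hD x)

section Bilinear

variable {α : Type*} [MeasurableSpace α] {μ : Measure α}
  {H F : Type*} [NormedAddCommGroup H] [NormedSpace ℝ H] [NormedAddCommGroup F] [NormedSpace ℝ F]

theorem ContinuousLinearMap.norm_apply_self_le (B : H →L[ℝ] H →L[ℝ] F) (v : H) :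
    ‖B v v‖ ≤ ‖B‖ * ‖v‖ ^ 2 :=
  (B.le_opNorm₂ v v).trans_eq (by ring)

theorem MeasureTheory.MemLp.integrable_bilin_self (B : H →L[ℝ] H →L[ℝ] F) {f : α → H}
    (hf : MemLp f 2 μ) : Integrable (fun a => B (f a) (f a)) μ :=
  (hf.norm.integrable_sq.const_mul ‖B‖).mono' (B.aestronglyMeasurable_comp₂ hf.1 hf.1)
    (Eventually.of_forall fun a => B.norm_apply_self_le (f a))

theorem norm_integral_bilin_self_le (B : H →L[ℝ] H →L[ℝ] F) {f : α → H} (hf : MemLp f 2 μ) :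
    ‖∫ a, B (f a) (f a) ∂μ‖ ≤ ‖B‖ * ∫ a, ‖f a‖ ^ 2 ∂μ :=
  (norm_integral_le_of_norm_le (hf.norm.integrable_sq.const_mul ‖B‖)
    (Eventually.of_forall fun a => B.norm_apply_self_le (f a))).trans_eq (integral_const_mul _ _)

end Bilinear

section Local

variable {α : Type*} [MeasurableSpace α] {μ : Measure α}
  {H V : Type*} [NormedAddCommGroup H] [NormedSpace ℝ H] [NormedAddCommGroup V] [NormedSpace ℝ V]
  (B : H →L[ℝ] H →L[ℝ] StrongDual ℝ V)

theorem abs_apply_self_sub_apply_self_le (P : H →L[ℝ] H) {ψ : V} {C : ℝ} (hC : 0 ≤ C)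
    (hψ : ∀ v w, |B v w ψ| ≤ C * ‖P v‖ * ‖P w‖ * ‖ψ‖) (a b : H) :
    |B a a ψ - B b b ψ| ≤ C * ‖ψ‖ * ‖P‖ * (‖P a - P b‖ * (‖a‖ + ‖b‖)) := by
  have hsplit : B a a ψ - B b b ψ = B (a - b) a ψ + B b (a - b) ψ := by
    simp only [map_sub, sub_apply]; ring
  calc |B a a ψ - B b b ψ| ≤ |B (a - b) a ψ| + |B b (a - b) ψ| := hsplit ▸ abs_add_le _ _
    _ ≤ C * ‖P (a - b)‖ * ‖P a‖ * ‖ψ‖ + C * ‖P b‖ * ‖P (a - b)‖ * ‖ψ‖ :=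
        add_le_add (hψ _ _) (hψ _ _)
    _ ≤ C * ‖P (a - b)‖ * (‖P‖ * ‖a‖) * ‖ψ‖ + C * (‖P‖ * ‖b‖) * ‖P (a - b)‖ * ‖ψ‖ := by
        gcongr <;> exact P.le_opNorm _
    _ = C * ‖ψ‖ * ‖P‖ * (‖P a - P b‖ * (‖a‖ + ‖b‖)) := by rw [map_sub]; ring

theorem tendsto_integral_apply_self_of_local (P : H →L[ℝ] H) {ψ : V} {C : ℝ} (hC : 0 ≤ C)
    (hψ : ∀ v w, |B v w ψ| ≤ C * ‖P v‖ * ‖P w‖ * ‖ψ‖)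
    {u : α → H} (hu : MemLp u 2 μ) {un : ℕ → α → H} (hun : ∀ n, MemLp (un n) 2 μ)
    {M : ℝ} (hbdd : ∀ n, ∫ a, ‖un n a‖ ^ 2 ∂μ ≤ M)
    (hconv : Tendsto (fun n => ∫ a, ‖P (un n a) - P (u a)‖ ^ 2 ∂μ) atTop (𝓝 0)) :
    Tendsto (fun n => ∫ a, B (un n a) (un n a) ψ ∂μ) atTop (𝓝 (∫ a, B (u a) (u a) ψ ∂μ)) := by
  have hdiff : ∀ n, MemLp (fun a => ‖P (un n a) - P (u a)‖) 2 μ := fun n =>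
    ((P.comp_memLp' (hun n)).sub (P.comp_memLp' hu)).norm
  have hsum : ∀ n, MemLp (fun a => ‖un n a‖ + ‖u a‖) 2 μ := fun n => (hun n).norm.add hu.norm
  have hprod : Tendsto (fun n => ∫ a, ‖P (un n a) - P (u a)‖ * (‖un n a‖ + ‖u a‖) ∂μ)
      atTop (𝓝 0) :=
    tendsto_integral_mul_of_tendsto_integral_sq
      (fun n => Eventually.of_forall fun _ => norm_nonneg _)
      (fun n => Eventually.of_forall fun _ => by positivity) hdiff hsum hconv
      (K := 2 * M + 2 * ∫ a, ‖u a‖ ^ 2 ∂μ)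
      fun n => (integral_add_sq_le (hun n).norm hu.norm).trans (by linarith [hbdd n])
  have hint : ∀ {f : α → H}, MemLp f 2 μ → Integrable (fun a => B (f a) (f a) ψ) μ :=
    fun hf => (hf.integrable_bilin_self B).apply_continuousLinearMap ψ
  rw [← tendsto_sub_nhds_zero_iff]
  refine squeeze_zero_norm (fun n => ?_) (by simpa using hprod.const_mul (C * ‖ψ‖ * ‖P‖))
  rw [← integral_sub (hint (hun n)) (hint hu), ← integral_const_mul]
  exact norm_integral_le_of_norm_le
    (((hdiff n).integrable_mul (hsum n)).const_mul _)
    (Eventually.of_forall fun a => abs_apply_self_sub_apply_self_le B P hC hψ _ _)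

theorem tendsto_integral_apply_self_of_tendsto_loc (ρ : ℕ → H →L[ℝ] H) {D : Set V}
    (hD : Dense D) (hloc : ∀ ψ ∈ D, ∃ (R : ℕ) (C : ℝ), 0 ≤ C ∧ ∀ v w : H,
      |B v w ψ| ≤ C * ‖ρ R v‖ * ‖ρ R w‖ * ‖ψ‖)
    {u : α → H} (hu : MemLp u 2 μ) {un : ℕ → α → H} (hun : ∀ n, MemLp (un n) 2 μ)
    {M : ℝ} (hbdd : ∀ n, ∫ a, ‖un n a‖ ^ 2 ∂μ ≤ M)
    (hconv : ∀ R, Tendsto (fun n => ∫ a, ‖ρ R (un n a) - ρ R (u a)‖ ^ 2 ∂μ) atTop (𝓝 0))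
    (ψ : V) :
    Tendsto (fun n => ∫ a, B (un n a) (un n a) ψ ∂μ) atTop (𝓝 (∫ a, B (u a) (u a) ψ ∂μ)) := by
  have happly : ∀ {f : α → H}, MemLp f 2 μ → ∀ φ,
      (∫ a, B (f a) (f a) ∂μ) φ = ∫ a, B (f a) (f a) φ ∂μ :=
    fun hf φ => ContinuousLinearMap.integral_apply (hf.integrable_bilin_self B) φ
  have hD_lim : ∀ φ ∈ D, Tendsto (fun n => (∫ a, B (un n a) (un n a) ∂μ) φ) atTop
      (𝓝 ((∫ a, B (u a) (u a) ∂μ) φ)) := by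
    intro φ hφ
    obtain ⟨R, C, hC, hφR⟩ := hloc φ hφ
    rw [happly hu]
    simp_rw [happly (hun _)]
    exact tendsto_integral_apply_self_of_local B (ρ R) hC hφR hu hun hbdd (hconv R)
  -- Instance search does not find the operator norm on `H →L[ℝ] H →L[ℝ] StrongDual ℝ V` unaided.
  let _ : NormedAddCommGroup (StrongDual ℝ V) := ContinuousLinearMap.toNormedAddCommGroup
  let _ : NormedSpace ℝ (StrongDual ℝ V) := ContinuousLinearMap.toNormedSpace
  have hnorm : ∀ n, ‖∫ a, B (un n a) (un n a) ∂μ‖ ≤ ‖B‖ * M := fun n =>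
    (norm_integral_bilin_self_le B (hun n)).trans (by gcongr; exact hbdd n)
  have h := ContinuousLinearMap.tendsto_apply_of_dense hnorm hD hD_lim ψ
  rwa [happly hu, funext fun n => happly (hun n) ψ] at h

end Local

theorem stmt_14_general {H Vγ : Type*}
    [NormedAddCommGroup H] [InnerProductSpace ℝ H]
    [NormedAddCommGroup Vγ] [NormedSpace ℝ Vγ]
    (B : H →L[ℝ] H →L[ℝ] StrongDual ℝ Vγ)
    (ρ : ℕ → H →L[ℝ] H)
    (D : Set Vγ) (hDdense : Dense D)
    (hloc : ∀ ψ ∈ D, ∃ (R : ℕ) (C : ℝ), 0 ≤ C ∧ ∀ v w : H,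
      |B v w ψ| ≤ C * ‖ρ R v‖ * ‖ρ R w‖ * ‖ψ‖)
    (T : ℝ)
    (u : ℝ → H) (hu : MemLp u 2 (volume.restrict (Set.Ioc 0 T)))
    (un : ℕ → ℝ → H) (hun : ∀ n, MemLp (un n) 2 (volume.restrict (Set.Ioc 0 T)))
    (hbdd : ∃ M : ℝ, ∀ n, (∫ t in Set.Ioc 0 T, ‖un n t‖ ^ 2) ≤ M)
    (hconv : ∀ R : ℕ,
      Tendsto (fun n => ∫ t in Set.Ioc 0 T, ‖ρ R (un n t) - ρ R (u t)‖ ^ 2)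
        atTop (nhds 0)) :
    ∀ t ∈ Set.Icc (0:ℝ) T, ∀ ψ : Vγ,
      Tendsto (fun n => ∫ s in Set.Ioc 0 t, B (un n s) (un n s) ψ) atTop
        (nhds (∫ s in Set.Ioc 0 t, B (u s) (u s) ψ)) := by
  intro t ht ψ
  obtain ⟨M, hM⟩ := hbdd
  have hμ : volume.restrict (Set.Ioc 0 t) ≤ volume.restrict (Set.Ioc 0 T) :=
    Measure.restrict_mono (Set.Ioc_subset_Ioc_right ht.2) le_rfl
  refine tendsto_integral_apply_self_of_tendsto_loc B ρ hDdense hloc (hu.mono_measure hμ)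
    (fun n => (hun n).mono_measure hμ)
    (fun n => (integral_norm_sq_mono_measure hμ (hun n)).trans (hM n)) (fun R => ?_) ψ
  exact squeeze_zero (fun n => integral_nonneg fun s => by positivity)
    (fun n => integral_norm_sq_mono_measure hμ
      (((ρ R).comp_memLp' (hun n)).sub ((ρ R).comp_memLp' hu)))
    (hconv R)

/-- (Lemma B.1.)  Let `u ∈ L²(0,T;H)` and let `(u_n)` be bounded in `L²(0,T;H)` with
`u_n → u` in `L²(0,T;H_loc)` (the local seminorms given by the localization operators
`ρ R`).  Let `B : H × H → V_γ′` be the continuous bilinear extension of the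
Navier–Stokes nonlinearity (`γ > d/2 + 1`), which is local on a dense set `D ⊆ V_γ`
of test functions:  `|⟨B(v,w), ψ⟩| ≤ C |ρ_R v|_H |ρ_R w|_H ‖ψ‖` for `ψ ∈ D` with
support in `𝒪_R`.  Then for every `t ∈ [0,T]` and every `ψ ∈ V_γ`,
`∫₀ᵗ ⟨B(u_n(s),u_n(s)), ψ⟩ ds → ∫₀ᵗ ⟨B(u(s),u(s)), ψ⟩ ds`. -/
theorem stmt_14 {H Vγ : Type*}
    [NormedAddCommGroup H] [InnerProductSpace ℝ H] [CompleteSpace H]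
    [NormedAddCommGroup Vγ] [NormedSpace ℝ Vγ]
    (B : H →L[ℝ] H →L[ℝ] StrongDual ℝ Vγ)
    (ρ : ℕ → H →L[ℝ] H)
    (D : Set Vγ) (hDdense : Dense D)
    (hloc : ∀ ψ ∈ D, ∃ (R : ℕ) (C : ℝ), 0 ≤ C ∧ ∀ v w : H,
      |B v w ψ| ≤ C * ‖ρ R v‖ * ‖ρ R w‖ * ‖ψ‖)
    (T : ℝ) (hT : 0 < T)
    (u : ℝ → H) (hu : MemLp u 2 (volume.restrict (Set.Ioc 0 T)))
    (un : ℕ → ℝ → H) (hun : ∀ n, MemLp (un n) 2 (volume.restrict (Set.Ioc 0 T)))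
    (hbdd : ∃ M : ℝ, ∀ n, (∫ t in Set.Ioc 0 T, ‖un n t‖ ^ 2) ≤ M)
    (hconv : ∀ R : ℕ,
      Tendsto (fun n => ∫ t in Set.Ioc 0 T, ‖ρ R (un n t) - ρ R (u t)‖ ^ 2)
        atTop (nhds 0)) :
    ∀ t ∈ Set.Icc (0:ℝ) T, ∀ ψ : Vγ,
      Tendsto (fun n => ∫ s in Set.Ioc 0 t, B (un n s) (un n s) ψ) atTop
        (nhds (∫ s in Set.Ioc 0 t, B (u s) (u s) ψ)) :=
  stmt_14_general B ρ D hDdense hloc T u hu un hun hbdd hconv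
end
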